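/- Let r be a nonzero complex number with r⁴ ≠ 1 and m = 1/r - r. Define (n-1)×(n-1) matrices M₁,…,M_{n-1} by the relations (△): Mᵢ has eigenvalue action ν_t(v_i) = r·v_i for t ∉ {i-1,i,i+1}, ν_i(v_i) = -(1/r)·v_i, ν_{i+1}(v_i) = r·(v_i + v_{i+1}), ν_{i-1}(v_i) = r·v_i + (1/r)·v_{i-1} on the standard basis (v_1,…,v_{n-1}). Then the Mᵢ satisfy the braid relations MᵢM_jMᵢ = M_jMᵢM_j for |i-j| = 1, MᵢM_j = M_jMᵢ for |i-j| ≥ 2, and Mᵢ² + m·Mᵢ = I for all i. -/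

import Mathlib

/-- The matrix `Mᵢ` of the set of relations `(△)`:
`Mᵢ vᵢ = -(1/r) vᵢ`, `Mᵢ vᵢ₋₁ = r (vᵢ₋₁ + vᵢ)`, `Mᵢ vᵢ₊₁ = r vᵢ₊₁ + (1/r) vᵢ`,
and `Mᵢ v_t = r v_t` for `t ∉ {i-1, i, i+1}`. -/
noncomputable def triMat (n : ℕ) (r : ℂ) (i : Fin (n - 1)) :
    Matrix (Fin (n - 1)) (Fin (n - 1)) ℂ :=
  Matrix.of fun a t =>
    if t = i then (if a = i then -r⁻¹ else 0)
    else if (t : ℕ) + 1 = (i : ℕ) then (if a = t ∨ a = i then r else 0)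
    else if (t : ℕ) = (i : ℕ) + 1 then
      (if a = t then r else if a = i then r⁻¹ else 0)
    else if a = t then r else 0

/-! Each `Mᵢ` is a rank-one perturbation `r • 1 + eᵢ ρᵢ` of a scalar matrix, with `eᵢ` the
`i`-th standard column and `ρᵢ` a row vector. Products of such perturbations are governed by the
pairings `ρᵢ eⱼ`: `(eᵢ ρᵢ)² = (ρᵢ eᵢ) eᵢ ρᵢ` and `eᵢ ρᵢ eⱼ ρⱼ eᵢ ρᵢ = (ρᵢ eⱼ)(ρⱼ eᵢ) eᵢ ρᵢ`. For
`E² = aE`, `F² = aF`, `EFE = bE`, `FEF = bF`, the two sides of the braid relation for `c + E` and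
`c + F` differ by `(c² + ca + b)(E - F)`, and here `c = r`, `a = -r⁻¹ - r`, `b = r⁻¹ r`, so this
vanishes; distant generators have `ρᵢ eⱼ = 0`, and the quadratic relation is the scalar identity
`r² + (r⁻¹ - r) r = 1`. -/

open Matrix

section HeckeRelations

variable {R A : Type*} [CommRing R] [Ring A] [Algebra R A] {a c : R} {E F : A}

theorem smul_one_add_mul_mul_eq {b : R} (hE : E * E = a • E) (hEFE : E * F * E = b • E) :
    (c • 1 + E) * (c • 1 + F) * (c • 1 + E) =
      c ^ 3 • 1 + c ^ 2 • (E + F) + c • (E * F + F * E) + (c ^ 2 + c * a + b) • E := by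
  simp only [add_mul, mul_add, smul_mul_assoc, mul_smul_comm, one_mul, mul_one, hE, hEFE]
  module

theorem smul_one_add_braid {b : R} (hE : E * E = a • E) (hF : F * F = a • F)
    (hEFE : E * F * E = b • E) (hFEF : F * E * F = b • F) (hc : c ^ 2 + c * a + b = 0) :
    (c • 1 + E) * (c • 1 + F) * (c • 1 + E) = (c • 1 + F) * (c • 1 + E) * (c • 1 + F) := by
  rw [smul_one_add_mul_mul_eq hE hEFE, smul_one_add_mul_mul_eq hF hFEF, hc, zero_smul,
    zero_smul, add_comm F, add_comm (F * E)]

theorem Commute.smul_one_add (c : R) (h : Commute E F) :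
    Commute (c • 1 + E) (c • 1 + F) := by
  have hc (X : A) : Commute (c • 1) X := (Commute.one_left X).smul_left c
  exact (hc _).add_left ((hc E).symm.add_right h)

theorem smul_one_add_sq_add_smul {m : R} (hE : E * E = a • E) (hc : c ^ 2 + m * c = 1)
    (ha : 2 * c + a + m = 0) : (c • 1 + E) ^ 2 + m • (c • 1 + E) = 1 := by
  calc (c • 1 + E) ^ 2 + m • (c • 1 + E) = (c ^ 2 + m * c) • 1 + (2 * c + a + m) • E := by
        simp only [sq, add_mul, mul_add, smul_mul_assoc, mul_smul_comm, one_mul, mul_one, hE]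
        module
    _ = 1 := by rw [hc, ha, one_smul, zero_smul, add_zero]

end HeckeRelations

section RankOne

variable {R ι : Type*} [CommRing R] [Fintype ι] [DecidableEq ι]

theorem vecMulVec_mul_vecMulVec_single (u φ ψ : ι → R) (j : ι) :
    vecMulVec u φ * vecMulVec (Pi.single j 1) ψ = φ j • vecMulVec u ψ := by
  rw [vecMulVec_mul_vecMulVec, dotProduct_single_one, vecMulVec_smul]

theorem vecMulVec_single_mul_mul_self (i j : ι) (φ ψ : ι → R) :
    vecMulVec (Pi.single i 1) φ * vecMulVec (Pi.single j 1) ψ * vecMulVec (Pi.single i 1) φ =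
      (φ j * ψ i) • vecMulVec (Pi.single i 1) φ := by
  rw [vecMulVec_mul_vecMulVec_single, smul_mul_assoc, vecMulVec_mul_vecMulVec_single, smul_smul]

end RankOne

-- the `i`-th row of `triMat n r i - r • 1`, its only nonzero row
noncomputable def triRow (n : ℕ) (r : ℂ) (i : Fin (n - 1)) : Fin (n - 1) → ℂ := fun b =>
  if b = i then -r⁻¹ - r
  else if (b : ℕ) + 1 = (i : ℕ) then r
  else if (b : ℕ) = (i : ℕ) + 1 then r⁻¹
  else 0

theorem triMat_eq (n : ℕ) (r : ℂ) (i : Fin (n - 1)) :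
    triMat n r i = r • 1 + vecMulVec (Pi.single i 1) (triRow n r i) := by
  ext a t
  simp only [triMat, triRow, of_apply, Matrix.add_apply, Matrix.smul_apply, one_apply,
    vecMulVec_apply, Pi.single_apply, smul_eq_mul]
  split_ifs <;> simp_all [Fin.ext_iff]

section triRow

variable {n : ℕ} (r : ℂ) {i j : Fin (n - 1)}

theorem triRow_self : triRow n r i i = -r⁻¹ - r := if_pos rfl

theorem triRow_of_succ_eq (h : (i : ℕ) + 1 = j) : triRow n r i j = r⁻¹ := by
  have hji : j ≠ i := by rw [Ne, Fin.ext_iff]; omega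
  rw [triRow, if_neg hji, if_neg (by omega), if_pos h.symm]

theorem triRow_of_eq_succ (h : (i : ℕ) + 1 = j) : triRow n r j i = r := by
  have hij : i ≠ j := by rw [Ne, Fin.ext_iff]; omega
  rw [triRow, if_neg hij, if_pos h]

theorem triRow_of_add_two_le (h : (i : ℕ) + 2 ≤ j ∨ (j : ℕ) + 2 ≤ i) : triRow n r i j = 0 := by
  have hji : j ≠ i := by rw [Ne, Fin.ext_iff]; omega
  rw [triRow, if_neg hji, if_neg (by omega), if_neg (by omega)]

theorem vecMulVec_triRow_mul_self (i : Fin (n - 1)) :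
    vecMulVec (Pi.single i 1) (triRow n r i) * vecMulVec (Pi.single i 1) (triRow n r i) =
      (-r⁻¹ - r) • vecMulVec (Pi.single i 1) (triRow n r i) := by
  rw [vecMulVec_mul_vecMulVec_single, triRow_self]

end triRow

section triMat

variable {n : ℕ} {r : ℂ} {i j : Fin (n - 1)}

theorem triMat_braid_of_succ_eq (h : (i : ℕ) + 1 = j) :
    triMat n r i * triMat n r j * triMat n r i = triMat n r j * triMat n r i * triMat n r j := by
  rw [triMat_eq, triMat_eq]
  refine smul_one_add_braid (vecMulVec_triRow_mul_self r i) (vecMulVec_triRow_mul_self r j)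
    (b := r⁻¹ * r) ?_ ?_ (by ring)
  · rw [vecMulVec_single_mul_mul_self, triRow_of_succ_eq r h, triRow_of_eq_succ r h]
  · rw [vecMulVec_single_mul_mul_self, triRow_of_succ_eq r h, triRow_of_eq_succ r h, mul_comm]

theorem triMat_commute_of_add_two_le (h : (i : ℕ) + 2 ≤ j ∨ (j : ℕ) + 2 ≤ i) :
    Commute (triMat n r i) (triMat n r j) := by
  rw [triMat_eq, triMat_eq]
  refine Commute.smul_one_add r ?_
  rw [Commute, SemiconjBy, vecMulVec_mul_vecMulVec_single, vecMulVec_mul_vecMulVec_single,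
    triRow_of_add_two_le r h, triRow_of_add_two_le r h.symm, zero_smul, zero_smul]

theorem triMat_sq_add_smul (hr : r ≠ 0) (i : Fin (n - 1)) :
    triMat n r i ^ 2 + (r⁻¹ - r) • triMat n r i = 1 := by
  rw [triMat_eq]
  refine smul_one_add_sq_add_smul (vecMulVec_triRow_mul_self r i) ?_ (by ring)
  field_simp
  ring

end triMat

theorem stmt_13_general (n : ℕ) (r m : ℂ) (hr : r ≠ 0) (hm : m = r⁻¹ - r) :
    (∀ i j : Fin (n - 1), (i : ℕ) + 1 = (j : ℕ) ∨ (j : ℕ) + 1 = (i : ℕ) →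
      triMat n r i * triMat n r j * triMat n r i =
        triMat n r j * triMat n r i * triMat n r j) ∧
    (∀ i j : Fin (n - 1), (i : ℕ) + 2 ≤ (j : ℕ) ∨ (j : ℕ) + 2 ≤ (i : ℕ) →
      triMat n r i * triMat n r j = triMat n r j * triMat n r i) ∧
    (∀ i : Fin (n - 1), triMat n r i ^ 2 + m • triMat n r i = 1) := by
  subst hm
  refine ⟨fun i j h => ?_, fun i j h => (triMat_commute_of_add_two_le h).eq,
    triMat_sq_add_smul hr⟩
  rcases h with h | h
  · exact triMat_braid_of_succ_eq h
  · exact (triMat_braid_of_succ_eq h).symm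

theorem stmt_13 (n : ℕ) (hn : 3 ≤ n) (r m : ℂ) (hr : r ≠ 0)
    (hr4 : r ^ 4 ≠ 1) (hm : m = r⁻¹ - r) :
    (∀ i j : Fin (n - 1), (i : ℕ) + 1 = (j : ℕ) ∨ (j : ℕ) + 1 = (i : ℕ) →
      triMat n r i * triMat n r j * triMat n r i =
        triMat n r j * triMat n r i * triMat n r j) ∧
    (∀ i j : Fin (n - 1), (i : ℕ) + 2 ≤ (j : ℕ) ∨ (j : ℕ) + 2 ≤ (i : ℕ) →
      triMat n r i * triMat n r j = triMat n r j * triMat n r i) ∧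
    (∀ i : Fin (n - 1), triMat n r i ^ 2 + m • triMat n r i = 1) :=
  stmt_13_general n r m hr hm
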